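/- Let (Ω, F, P) be a probability space, ẑ : Ω → [0,1] a random variable (the confidence score), and A ∈ F an event (the event that the classifier's prediction is correct) with 0 < P(A) < 1. Define the overconfidence o = E[ẑ | Aᶜ], the underconfidence u = E[1 − ẑ | A], and for 1 ≤ p < ∞ the expected calibration error ECE_p = E[|ẑ − E[1_A | ẑ]|^p]^{1/p}, where E[1_A | ẑ] denotes the conditional expectation of the indicator of A given the σ-algebra generated by ẑ. Then |o · P(Aᶜ) − u · P(A)| ≤ ECE_p. -/

import Mathlib

/-!
Both weighted confidences are set integrals of `ẑ`: `o · P(Aᶜ) = ∫_{Aᶜ} ẑ` and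
`u · P(A) = P(A) - ∫_A ẑ`. Their difference is therefore `E[ẑ] - P(A) = E[ẑ - E[1_A | ẑ]]`,
since conditional expectation preserves the mean, and `|E f| ≤ E |f| ≤ (E |f|^p)^(1/p)` by
Jensen's inequality for `x ↦ x^p` on a probability space.
-/

open MeasureTheory ProbabilityTheory

section
variable {Ω : Type*} {m₀ : MeasurableSpace Ω} {μ : Measure Ω}

lemma measureReal_smul_integral_cond {E : Type*} [NormedAddCommGroup E] [NormedSpace ℝ E]
    {s : Set Ω} (hs : μ s ≠ ⊤) (f : Ω → E) :
    μ.real s • ∫ x, f x ∂μ[|s] = ∫ x in s, f x ∂μ := by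
  by_cases hs0 : μ s = 0
  · simp [Measure.restrict_eq_zero.mpr hs0, measureReal_def, hs0]
  · rw [ProbabilityTheory.cond, integral_smul_measure, smul_smul, ENNReal.toReal_inv,
      measureReal_def, mul_inv_cancel₀ (ENNReal.toReal_ne_zero.mpr ⟨hs0, hs⟩), one_smul]

lemma setIntegral_compl_sub_setIntegral_one_sub [IsFiniteMeasure μ] {A : Set Ω}
    (hA : MeasurableSet A) {f : Ω → ℝ} (hf : Integrable f μ) :
    ∫ x in Aᶜ, f x ∂μ - ∫ x in A, (1 - f x) ∂μ = ∫ x, f x ∂μ - μ.real A := by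
  rw [integral_sub (integrable_const 1).integrableOn hf.integrableOn, setIntegral_const,
    smul_eq_mul, mul_one, ← integral_add_compl hA hf]
  ring

lemma integral_sub_condExp_indicator_one [IsFiniteMeasure μ] {m : MeasurableSpace Ω}
    (hm : m ≤ m₀) {A : Set Ω} (hA : MeasurableSet[m₀] A) {f : Ω → ℝ} (hf : Integrable f μ) :
    ∫ x, (f x - μ[A.indicator (fun _ => (1 : ℝ)) | m] x) ∂μ = ∫ x, f x ∂μ - μ.real A := by
  rw [integral_sub hf integrable_condExp, integral_condExp hm]
  exact congrArg _ (integral_indicator_one hA)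

lemma integrable_abs_rpow_of_ae_abs_le [IsFiniteMeasure μ] {f : Ω → ℝ}
    (hf : AEStronglyMeasurable f μ) {p C : ℝ} (hp : 0 ≤ p) (hfC : ∀ᵐ x ∂μ, |f x| ≤ C) :
    Integrable (fun x => |f x| ^ p) μ := by
  refine .of_bound (((Real.continuous_rpow_const hp).comp continuous_abs).comp_aestronglyMeasurable
    hf) (C ^ p) ?_
  filter_upwards [hfC] with x hx
  rw [Real.norm_eq_abs, abs_of_nonneg (by positivity)]
  exact Real.rpow_le_rpow (abs_nonneg _) hx hp

lemma abs_integral_le_integral_abs_rpow_rpow_one_div [IsProbabilityMeasure μ] {f : Ω → ℝ}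
    (hf : Integrable f μ) {p : ℝ} (hp : 1 ≤ p) (hfp : Integrable (fun x => |f x| ^ p) μ) :
    |∫ x, f x ∂μ| ≤ (∫ x, |f x| ^ p ∂μ) ^ (1 / p) := by
  have hp0 : 0 < p := zero_lt_one.trans_le hp
  have jensen : (∫ x, |f x| ∂μ) ^ p ≤ ∫ x, |f x| ^ p ∂μ :=
    (convexOn_rpow hp).map_integral_le (Real.continuous_rpow_const hp0.le).continuousOn
      isClosed_Ici (ae_of_all _ fun x => abs_nonneg (f x)) hf.abs hfp
  calc |∫ x, f x ∂μ| ≤ ∫ x, |f x| ∂μ := abs_integral_le_integral_abs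
    _ ≤ (∫ x, |f x| ^ p ∂μ) ^ (1 / p) := by
      rwa [one_div, Real.le_rpow_inv_iff_of_pos (integral_nonneg fun x => abs_nonneg _)
        (integral_nonneg fun x => by positivity) hp0]

end

theorem overconfidence_underconfidence_le_ECE_general
    {Ω : Type*} [MeasurableSpace Ω] (μ : Measure Ω) [IsProbabilityMeasure μ]
    (z : Ω → ℝ) (hz_meas : Measurable z) (hz01 : ∀ ω, z ω ∈ Set.Icc (0 : ℝ) 1)
    (A : Set Ω) (hA : MeasurableSet A)
    (p : ℝ) (hp : 1 ≤ p)
    (o u ece : ℝ)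
    (ho : o = ∫ ω, z ω ∂(μ[|Aᶜ]))
    (hu : u = ∫ ω, (1 - z ω) ∂(μ[|A]))
    (hece : ece = (∫ ω, |z ω -
        (μ[A.indicator (fun _ => (1 : ℝ)) | MeasurableSpace.comap z Real.measurableSpace]) ω| ^ p ∂μ)
        ^ (1 / p)) :
    |o * (μ Aᶜ).toReal - u * (μ A).toReal| ≤ ece := by
  set g := μ[A.indicator (fun _ => (1 : ℝ)) | MeasurableSpace.comap z Real.measurableSpace]
  have hz_abs : ∀ ω, |z ω| ≤ 1 := fun ω => abs_le.mpr ⟨by linarith [(hz01 ω).1], (hz01 ω).2⟩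
  have hz_int : Integrable z μ := .of_bound hz_meas.aestronglyMeasurable 1 (ae_of_all _ hz_abs)
  have hg_abs : ∀ᵐ ω ∂μ, |g ω| ≤ 1 := ae_bdd_abs_condExp_of_ae_bdd_abs <| ae_of_all _ fun ω => by
    by_cases hω : ω ∈ A <;> simp [hω]
  have hdiff_abs : ∀ᵐ ω ∂μ, |z ω - g ω| ≤ 2 := by
    filter_upwards [hg_abs] with ω hω
    linarith [abs_sub (z ω) (g ω), hz_abs ω]
  have hcalib : o * (μ Aᶜ).toReal - u * (μ A).toReal = ∫ ω, (z ω - g ω) ∂μ := by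
    rw [integral_sub_condExp_indicator_one hz_meas.comap_le hA hz_int,
      ← setIntegral_compl_sub_setIntegral_one_sub hA hz_int,
      ← measureReal_smul_integral_cond (measure_ne_top μ Aᶜ),
      ← measureReal_smul_integral_cond (measure_ne_top μ A), ho, hu, smul_eq_mul, smul_eq_mul,
      measureReal_def, measureReal_def]
    ring
  rw [hece, hcalib]
  exact abs_integral_le_integral_abs_rpow_rpow_one_div (hz_int.sub integrable_condExp) hp
    (integrable_abs_rpow_of_ae_abs_le (hz_int.sub integrable_condExp).aestronglyMeasurable
      (zero_le_one.trans hp) hdiff_abs)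

/-- The weighted absolute difference of over- and underconfidence is bounded by the
expected calibration error `ECE_p`. -/
theorem overconfidence_underconfidence_le_ECE
    {Ω : Type*} [MeasurableSpace Ω] (μ : Measure Ω) [IsProbabilityMeasure μ]
    (z : Ω → ℝ) (hz_meas : Measurable z) (hz01 : ∀ ω, z ω ∈ Set.Icc (0 : ℝ) 1)
    (A : Set Ω) (hA : MeasurableSet A) (hA0 : 0 < μ A) (hA1 : μ A < 1)
    (p : ℝ) (hp : 1 ≤ p)
    (o u ece : ℝ)
    (ho : o = ∫ ω, z ω ∂(μ[|Aᶜ]))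
    (hu : u = ∫ ω, (1 - z ω) ∂(μ[|A]))
    (hece : ece = (∫ ω, |z ω -
        (μ[A.indicator (fun _ => (1 : ℝ)) | MeasurableSpace.comap z Real.measurableSpace]) ω| ^ p ∂μ)
        ^ (1 / p)) :
    |o * (μ Aᶜ).toReal - u * (μ A).toReal| ≤ ece :=
  overconfidence_underconfidence_le_ECE_general μ z hz_meas hz01 A hA p hp o u ece ho hu hece
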